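/- arXiv:math/0211388 — 3 statements merged into one kernel-verified Lean document; each statement's English description precedes it below -/
import Mathlib

section
/- Every irreducible root system Φ in a Euclidean space E admits an element w of its Weyl group such that 1 is not an eigenvalue of the linear map w : E → E (equivalently, w − id is invertible on E). -/
section Aux
variable {E : Type*} [NormedAddCommGroup E] [InnerProductSpace ℝ E] [FiniteDimensional ℝ E]

noncomputable def rRefl (α : E) : E ≃ₗᵢ[ℝ] E := Submodule.reflection (ℝ ∙ α)ᗮ

lemma rRefl_apply (α v : E) :
    rRefl α v = v - (2 * (inner ℝ α v : ℝ) / (inner ℝ α α : ℝ)) • α := by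
  rw [rRefl, Submodule.reflection_orthogonal_apply, Submodule.reflection_singleton_apply,
    real_inner_self_eq_norm_sq, two_smul ℕ]
  simp only [RCLike.ofReal_real_eq_id, id]
  rcases eq_or_ne α 0 with rfl | h
  · simp
  · have h2 : (‖α‖:ℝ) ^ 2 ≠ 0 := pow_ne_zero _ (norm_ne_zero_iff.mpr h)
    rw [neg_sub, ← two_smul ℝ, smul_smul, sub_right_inj]
    congr 1
    field_simp

lemma rRefl_involutive (α : E) (v : E) : rRefl α (rRefl α v) = v :=
  Submodule.reflection_reflection _ v

lemma prod_refl_sub_mem_span (l : List E) (v : E) :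
    ((l.map rRefl).prod) v - v ∈ Submodule.span ℝ {x : E | x ∈ l} := by
  induction l with
  | nil => simp
  | cons α l ih =>
    have hle : Submodule.span ℝ {x : E | x ∈ l} ≤ Submodule.span ℝ {x : E | x ∈ α :: l} :=
      Submodule.span_mono (fun x hx => List.mem_cons_of_mem _ hx)
    set W := (l.map rRefl).prod with hW
    have : ((List.map rRefl (α :: l)).prod) v = rRefl α (W v) := by
      simp [List.prod_cons, hW]
    rw [this, rRefl_apply]
    have h1 : W v - (2 * (inner ℝ α (W v) : ℝ) / (inner ℝ α α : ℝ)) • α - v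
        = (W v - v) - (2 * (inner ℝ α (W v) : ℝ) / (inner ℝ α α : ℝ)) • α := by abel
    rw [h1]
    refine Submodule.sub_mem _ (hle ih) (Submodule.smul_mem _ _ ?_)
    exact Submodule.subset_span (by simp)

lemma fixed_inner_zero {ι : Type*} (b : ι → E) (hb : LinearIndependent ℝ b) :
    ∀ (L : List ι), L.Nodup → ∀ v : E,
      ((L.map (fun i => rRefl (b i))).prod) v = v → ∀ i ∈ L, (inner ℝ (b i) v : ℝ) = 0 := by
  intro L
  induction L with
  | nil => intro _ v _ i hi; simp at hi
  | cons i L ih =>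
    intro hnd v hv j hj
    set W := (L.map (fun i => rRefl (b i))).prod with hW
    have hv' : rRefl (b i) (W v) = v := by
      simpa [List.prod_cons] using hv
    have hW' : W v = rRefl (b i) v := by
      have := congrArg (rRefl (b i)) hv'
      rwa [rRefl_involutive] at this
    set c : ℝ := 2 * (inner ℝ (b i) v : ℝ) / (inner ℝ (b i) (b i) : ℝ) with hc
    have hWv : W v - v = -(c • b i) := by
      rw [hW', rRefl_apply]; abel
    -- W v - v lies in span of b '' L
    have hmem : W v - v ∈ Submodule.span ℝ (b '' {j | j ∈ L}) := by
      have := prod_refl_sub_mem_span (L.map b) v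
      have heq : (L.map b).map rRefl = L.map (fun i => rRefl (b i)) := by
        rw [List.map_map]; rfl
      rw [heq] at this
      have hset : {x : E | x ∈ L.map b} = b '' {j | j ∈ L} := by
        ext x; simp [List.mem_map, Set.mem_image]
      rwa [hset] at this
    have hinotL : i ∉ L := (List.nodup_cons.mp hnd).1
    have hnotmem : b i ∉ Submodule.span ℝ (b '' {j | j ∈ L}) :=
      hb.notMem_span_image (by simpa using hinotL)
    have hc0 : c = 0 := by
      by_contra hc0
      apply hnotmem
      have : b i = c⁻¹ • (c • b i) := by rw [smul_smul, inv_mul_cancel₀ hc0, one_smul]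
      rw [this]
      refine Submodule.smul_mem _ _ ?_
      have : c • b i = -(W v - v) := by rw [hWv]; abel
      rw [this]
      exact Submodule.neg_mem _ hmem
    have hbi : b i ≠ 0 := hb.ne_zero i
    have hii : (inner ℝ (b i) (b i) : ℝ) ≠ 0 := by
      rw [real_inner_self_eq_norm_sq]
      exact pow_ne_zero _ (norm_ne_zero_iff.mpr hbi)
    rcases List.mem_cons.mp hj with rfl | hjL
    · have h2 := hc0
      rw [hc, div_eq_zero_iff] at h2
      rcases h2 with h2 | h2
      · linarith
      · exact absurd h2 hii
    · have hfix : W v = v := by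
        rw [hW', rRefl_apply, ← hc, hc0]; simp
      exact ih (List.nodup_cons.mp hnd).2 v hfix j hjL

end Aux

/-- The Weyl group of a set of roots `Φ` in a real inner product space: the subgroup of the
group of linear isometries generated by the reflections in the roots. -/
noncomputable def weylGroup {E : Type*} [NormedAddCommGroup E] [InnerProductSpace ℝ E]
    (Φ : Set E) : Subgroup (E ≃ₗᵢ[ℝ] E) :=
  Subgroup.closure
    {g | ∃ α ∈ Φ, α ≠ 0 ∧ ∀ v, g v = v - (2 * (inner ℝ α v : ℝ) / (inner ℝ α α : ℝ)) • α}

/-- An irreducible (crystallographic) root system in a Euclidean space `E`. -/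
structure IsIrreducibleRootSystem {E : Type*} [NormedAddCommGroup E] [InnerProductSpace ℝ E]
    (Φ : Set E) : Prop where
  finite : Φ.Finite
  nonempty : Φ.Nonempty
  spans : Submodule.span ℝ Φ = ⊤
  not_zero : (0 : E) ∉ Φ
  reflect_mem : ∀ α ∈ Φ, ∀ β ∈ Φ,
    β - (2 * (inner ℝ α β : ℝ) / (inner ℝ α α : ℝ)) • α ∈ Φ
  crystallographic : ∀ α ∈ Φ, ∀ β ∈ Φ,
    ∃ n : ℤ, (2 * (inner ℝ α β : ℝ) / (inner ℝ α α : ℝ)) = n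
  irreducible : ∀ Φ₁ Φ₂ : Set E, Φ = Φ₁ ∪ Φ₂ →
    (∀ α ∈ Φ₁, ∀ β ∈ Φ₂, (inner ℝ α β : ℝ) = 0) → Φ₁ = ∅ ∨ Φ₂ = ∅

/-- Every irreducible root system `Φ` in a Euclidean space `E` admits an element
`w` of its Weyl group such that `1` is not an eigenvalue of `w : E → E`. -/
theorem exists_weyl_element_no_eigenvalue_one
    {E : Type*} [NormedAddCommGroup E] [InnerProductSpace ℝ E] [FiniteDimensional ℝ E]
    (Φ : Set E) (hΦ : IsIrreducibleRootSystem Φ) :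
    ∃ w : E ≃ₗᵢ[ℝ] E, w ∈ weylGroup Φ ∧ ∀ v : E, w v = v → v = 0 := by
  obtain ⟨s, hsub, hspan, hli⟩ := exists_linearIndependent ℝ Φ
  haveI : Fintype s := (hΦ.finite.subset hsub).fintype
  set b : s → E := Subtype.val with hb
  set L : List s := (Finset.univ : Finset s).toList with hL
  have hLnd : L.Nodup := Finset.nodup_toList _
  refine ⟨(L.map (fun i => rRefl (b i))).prod, ?_, ?_⟩
  · refine Subgroup.list_prod_mem _ ?_
    intro g hg
    simp only [List.mem_map] at hg
    obtain ⟨i, _, rfl⟩ := hg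
    apply Subgroup.subset_closure
    refine ⟨b i, hsub i.2, ?_, fun v => rRefl_apply (b i) v⟩
    intro h0
    exact hΦ.not_zero (h0 ▸ hsub i.2)
  · intro v hv
    have hall : ∀ i ∈ L, (inner ℝ (b i) v : ℝ) = 0 :=
      fixed_inner_zero b hli L hLnd v hv
    have hs : ∀ u ∈ s, (inner ℝ u v : ℝ) = 0 := by
      intro u hu
      exact hall ⟨u, hu⟩ (Finset.mem_toList.mpr (Finset.mem_univ _))
    have hspan' : ∀ u ∈ Submodule.span ℝ s, (inner ℝ u v : ℝ) = 0 := by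
      intro u hu
      induction hu using Submodule.span_induction with
      | mem x hx => exact hs x hx
      | zero => simp
      | add x y _ _ hx hy => rw [inner_add_left, hx, hy, add_zero]
      | smul c x _ hx => rw [real_inner_smul_left, hx, mul_zero]
    have : (inner ℝ v v : ℝ) = 0 := by
      apply hspan'
      rw [hspan, hΦ.spans]
      trivial
    exact inner_self_eq_zero.mp this
end

section
/- Let G be a compact connected Lie group, T a maximal torus with Lie algebra 𝔱, and suppose w ∈ W = N(T)/T satisfies that ξ ↦ w·ξ − ξ is surjective on 𝔱. Then for every ξ ∈ 𝔱 there exist a ∈ N(T) representing w and ξ' ∈ 𝔱 such that a · exp(tξ') · a⁻¹ · exp(−tξ') = exp(tξ) for all t ∈ ℝ; in particular every element of T = exp(𝔱) is a commutator [a, exp(ξ')] in G. -/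
open Manifold
open scoped commutatorElement

/-- Let `G` be a compact connected Lie group with maximal torus `T`, Lie
algebra `𝔱` of `T` (with exponential `exp : 𝔱 → G` having image `T`) and adjoint action
`Ad` of `N(T)` on `𝔱`.  If `w ∈ W = N(T)/T`, represented by `a₀ ∈ N(T)`, is such that
`ξ ↦ w·ξ − ξ` is surjective on `𝔱`, then for every `ξ ∈ 𝔱` there are a representative
`a ∈ a₀T ⊆ N(T)` of `w` and `ξ' ∈ 𝔱` with
`a · exp(tξ') · a⁻¹ · exp(tξ')⁻¹ = exp(tξ)` for all `t ∈ ℝ`; in particular every element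
`exp(ξ)` of `T` is a commutator `[a, exp(ξ')]` in `G`. -/
theorem weyl_surjective_gives_commutators
    {EM : Type*} [NormedAddCommGroup EM] [NormedSpace ℝ EM] [FiniteDimensional ℝ EM]
    (G : Type*) [TopologicalSpace G] [ChartedSpace EM G] [Group G] [IsTopologicalGroup G]
    [LieGroup (modelWithCornersSelf ℝ EM) (⊤ : ℕ∞) G] [CompactSpace G] [ConnectedSpace G]
    -- `T` is a maximal torus of `G`:
    (T : Subgroup G) (hTcomm : ∀ a ∈ T, ∀ b ∈ T, a * b = b * a)
    (hTconn : IsConnected (T : Set G)) (hTclosed : IsClosed (T : Set G))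
    (hTmax : ∀ T' : Subgroup G, (∀ a ∈ T', ∀ b ∈ T', a * b = b * a) →
      IsConnected (T' : Set G) → IsClosed (T' : Set G) → T ≤ T' → T' = T)
    -- `𝔱` is the Lie algebra of `T`, with exponential map `exp` and adjoint action `Ad`:
    (𝔱 : Type*) [AddCommGroup 𝔱] [Module ℝ 𝔱] [FiniteDimensional ℝ 𝔱]
    (exp : 𝔱 → G) (hexp : ∀ ξ η : 𝔱, exp (ξ + η) = exp ξ * exp η)
    (hexp_range : Set.range exp = (T : Set G))
    (Ad : ↥(Subgroup.normalizer (T : Set G)) →* (𝔱 ≃ₗ[ℝ] 𝔱))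
    (hAd : ∀ (a : ↥(Subgroup.normalizer (T : Set G))) (ξ : 𝔱), exp (Ad a ξ) = (a : G) * exp ξ * (a : G)⁻¹)
    (hAdT : ∀ a : ↥(Subgroup.normalizer (T : Set G)), (a : G) ∈ T → Ad a = 1)
    -- `w`, represented by `a₀ ∈ N(T)`, with `ξ ↦ w·ξ − ξ` surjective:
    (a₀ : ↥(Subgroup.normalizer (T : Set G))) (hsurj : Function.Surjective (fun ξ : 𝔱 => Ad a₀ ξ - ξ)) :
    (∀ ξ : 𝔱, ∃ a : ↥(Subgroup.normalizer (T : Set G)), (∃ t ∈ T, (a : G) = (a₀ : G) * t) ∧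
      ∃ ξ' : 𝔱, ∀ s : ℝ,
        (a : G) * exp (s • ξ') * (a : G)⁻¹ * (exp (s • ξ'))⁻¹ = exp (s • ξ)) ∧
    (∀ ξ : 𝔱, ∃ (a : G) (ξ' : 𝔱), exp ξ = ⁅a, exp ξ'⁆) := by
  have hsub : ∀ x y : 𝔱, exp (x - y) = exp x * (exp y)⁻¹ := by
    intro x y
    have : exp (x - y) * exp y = exp x := by
      rw [← hexp, sub_add_cancel]
    rw [← this, mul_assoc, mul_inv_cancel, mul_one]
  have main : ∀ ξ : 𝔱, ∃ ξ' : 𝔱, ∀ s : ℝ,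
      (a₀ : G) * exp (s • ξ') * (a₀ : G)⁻¹ * (exp (s • ξ'))⁻¹ = exp (s • ξ) := by
    intro ξ
    obtain ⟨ξ', hξ'⟩ := hsurj ξ
    refine ⟨ξ', fun s => ?_⟩
    have h1 : exp (Ad a₀ (s • ξ')) = (a₀ : G) * exp (s • ξ') * (a₀ : G)⁻¹ := hAd a₀ _
    calc (a₀ : G) * exp (s • ξ') * (a₀ : G)⁻¹ * (exp (s • ξ'))⁻¹
        = exp (Ad a₀ (s • ξ')) * (exp (s • ξ'))⁻¹ := by rw [h1]
      _ = exp (Ad a₀ (s • ξ') - s • ξ') := (hsub _ _).symm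
      _ = exp (s • ξ) := by
          congr 1
          rw [map_smul, ← smul_sub]
          simp only at hξ'
          rw [hξ']
  constructor
  · intro ξ
    obtain ⟨ξ', h⟩ := main ξ
    exact ⟨a₀, ⟨1, T.one_mem, by simp⟩, ξ', h⟩
  · intro ξ
    obtain ⟨ξ', h⟩ := main ξ
    refine ⟨(a₀ : G), ξ', ?_⟩
    have := h 1
    simp only [one_smul] at this
    rw [commutatorElement_def, this]
end

section
/- For the root system of type E₇ in ℝ⁷ (with roots ±(εᵢ±εⱼ) for 1 ≤ i < j ≤ 7 together with ½Σ(−1)^{k(i)}εᵢ where Σk(i) is odd), the linear map w given by ε₁ ↦ ε₂, ε₂ ↦ −ε₁, εᵢ ↦ −εᵢ for i ≥ 3, is an element of the Weyl group and has eigenvalues i, −i, −1 only; in particular 1 is not an eigenvalue of w. -/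
noncomputable def eps {n : ℕ} (i : Fin n) : EuclideanSpace ℝ (Fin n) :=
  EuclideanSpace.single i 1

/-- Roots `±(εᵢ ± εⱼ)`, `i ≠ j`. -/
noncomputable def rootsD (n : ℕ) : Set (EuclideanSpace ℝ (Fin n)) :=
  {x | ∃ i j : Fin n, i ≠ j ∧
    (x = eps i + eps j ∨ x = eps i - eps j ∨ x = -eps i - eps j)}

/-- The `E₇` root system in `ℝ⁷` (realization of the paper): `±(εᵢ ± εⱼ)` together with the
half-sums `½ Σᵢ (−1)^{k(i)} εᵢ` with an odd number of minus signs. -/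
noncomputable def rootsE7 : Set (EuclideanSpace ℝ (Fin 7)) :=
  rootsD 7 ∪
  {x | ∃ k : Fin 7 → Bool, Odd (Finset.univ.filter fun i => k i).card ∧
    x = (1 / 2 : ℝ) • ∑ i, (if k i then (-1 : ℝ) else 1) • eps i}

noncomputable def sp (σ : Equiv.Perm (Fin 7)) (s : Fin 7 → ℝ) (hs : ∀ i, s i = 1 ∨ s i = -1) :
    EuclideanSpace ℝ (Fin 7) ≃ₗᵢ[ℝ] EuclideanSpace ℝ (Fin 7) where
  toFun v := WithLp.toLp 2 (fun i => s i * v (σ i))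
  invFun v := WithLp.toLp 2 (fun i => s (σ.symm i) * v (σ.symm i))
  map_add' v w := by ext i; simp [mul_add]
  map_smul' c v := by ext i; simp; ring
  left_inv v := by
    ext i
    show s (σ.symm i) * (s (σ.symm i) * v (σ (σ.symm i))) = v i
    rw [Equiv.apply_symm_apply]
    rcases hs (σ.symm i) with h | h <;> simp [h]
  right_inv v := by
    ext i
    show s i * (s (σ.symm (σ i)) * v (σ.symm (σ i))) = v i
    rw [Equiv.symm_apply_apply]
    rcases hs i with h | h <;> simp [h]
  norm_map' v := by
    simp only [EuclideanSpace.norm_eq]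
    congr 1
    calc ∑ i, ‖s i * v (σ i)‖ ^ 2 = ∑ i, ‖v (σ i)‖ ^ 2 := by
          refine Finset.sum_congr rfl fun i _ => ?_
          rcases hs i with h | h <;> simp [h]
      _ = ∑ i, ‖v i‖ ^ 2 := Equiv.sum_comp σ (fun i => ‖v i‖ ^ 2)

@[simp] lemma sp_apply (σ s hs) (v : EuclideanSpace ℝ (Fin 7)) (i : Fin 7) :
    sp σ s hs v i = s i * v (σ i) := rfl

lemma eps_apply {n : ℕ} (i k : Fin n) : eps i k = if k = i then 1 else 0 := by
  simp [eps, EuclideanSpace.single_apply]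

lemma inner_eps {n : ℕ} (i : Fin n) (v : EuclideanSpace ℝ (Fin n)) :
    (inner ℝ (eps i) v : ℝ) = v i := by
  simp [eps, EuclideanSpace.inner_single_left]

def gens : Set (EuclideanSpace ℝ (Fin 7) ≃ₗᵢ[ℝ] EuclideanSpace ℝ (Fin 7)) :=
  {g | ∃ α ∈ rootsE7, α ≠ 0 ∧ ∀ v, g v = v - (2 * (inner ℝ α v : ℝ) / (inner ℝ α α : ℝ)) • α}

lemma mem_sub (i j : Fin 7) (hij : i ≠ j) :
    sp (Equiv.swap i j) (fun _ => 1) (fun _ => Or.inl rfl) ∈ gens := by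
  refine ⟨eps i - eps j, Or.inl ⟨i, j, hij, Or.inr (Or.inl rfl)⟩, ?_, ?_⟩
  · intro h
    have : (eps i - eps j) i = (0 : EuclideanSpace ℝ (Fin 7)) i := by rw [h]
    rw [show ((eps i - eps j) i) = eps i i - eps j i from rfl] at this
    simp [eps_apply, hij, (Ne.symm hij)] at this
  · intro v
    have h1 : (inner ℝ (eps i - eps j) v : ℝ) = v i - v j := by
      rw [inner_sub_left, inner_eps, inner_eps]
    have h2 : (inner ℝ (eps i - eps j) (eps i - eps j) : ℝ) = 2 := by
      rw [inner_sub_left, inner_sub_right, inner_sub_right, inner_eps, inner_eps]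
      simp only [inner_eps]
      simp [eps_apply, hij, Ne.symm hij]; norm_num
    rw [h1, h2]
    ext k
    show (1 : ℝ) * v (Equiv.swap i j k) = v k - (2 * (v i - v j) / 2) * ((eps i - eps j) k)
    rw [show ((eps i - eps j) k) = eps i k - eps j k from rfl]
    rcases eq_or_ne k i with rfl | hki
    · rw [Equiv.swap_apply_left]; simp [eps_apply, hij, Ne.symm hij]; try ring
    rcases eq_or_ne k j with rfl | hkj
    · rw [Equiv.swap_apply_right]; simp [eps_apply, hij, Ne.symm hij]; try ring
    · rw [Equiv.swap_apply_of_ne_of_ne hki hkj]; simp [eps_apply, hki, hkj]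

lemma mem_add (i j : Fin 7) (hij : i ≠ j) :
    sp (Equiv.swap i j) (fun k => if k = i ∨ k = j then -1 else 1)
      (fun k => by by_cases h : k = i ∨ k = j <;> simp [h]) ∈ gens := by
  refine ⟨eps i + eps j, Or.inl ⟨i, j, hij, Or.inl rfl⟩, ?_, ?_⟩
  · intro h
    have : (eps i + eps j) i = (0 : EuclideanSpace ℝ (Fin 7)) i := by rw [h]
    rw [show ((eps i + eps j) i) = eps i i + eps j i from rfl] at this
    simp [eps_apply, hij, (Ne.symm hij)] at this
  · intro v
    have h1 : (inner ℝ (eps i + eps j) v : ℝ) = v i + v j := by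
      rw [inner_add_left, inner_eps, inner_eps]
    have h2 : (inner ℝ (eps i + eps j) (eps i + eps j) : ℝ) = 2 := by
      rw [inner_add_left, inner_add_right, inner_add_right, inner_eps, inner_eps]
      simp only [inner_eps]
      simp [eps_apply, hij, Ne.symm hij]; norm_num
    rw [h1, h2]
    ext k
    show (if k = i ∨ k = j then (-1:ℝ) else 1) * v (Equiv.swap i j k)
      = v k - (2 * (v i + v j) / 2) * ((eps i + eps j) k)
    rw [show ((eps i + eps j) k) = eps i k + eps j k from rfl]
    rcases eq_or_ne k i with rfl | hki
    · rw [Equiv.swap_apply_left]; simp [eps_apply, hij, Ne.symm hij]; try ring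
    rcases eq_or_ne k j with rfl | hkj
    · rw [Equiv.swap_apply_right]; simp [eps_apply, hij, Ne.symm hij]; try ring
    · rw [Equiv.swap_apply_of_ne_of_ne hki hkj]; simp [eps_apply, hki, hkj]

noncomputable def wmap : EuclideanSpace ℝ (Fin 7) ≃ₗᵢ[ℝ] EuclideanSpace ℝ (Fin 7) :=
  sp (Equiv.swap 0 1) (fun i => if i = 1 then 1 else -1)
    (fun i => by by_cases h : i = 1 <;> simp [h])

lemma wmap_apply (v : EuclideanSpace ℝ (Fin 7)) (i : Fin 7) :
    wmap v i = if i = 0 then -(v 1) else if i = 1 then v 0 else -(v i) := by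
  show (if i = 1 then (1:ℝ) else -1) * v (Equiv.swap 0 1 i) = _
  fin_cases i <;> simp [Equiv.swap_apply_def] <;> norm_num

def sA (i j : Fin 7) : Fin 7 → ℝ := fun k => if k = i ∨ k = j then -1 else 1

lemma wmap_eq : wmap =
    sp (Equiv.swap 0 2) (sA 0 2) (fun k => by by_cases h : k = 0 ∨ k = 2 <;> simp [sA, h]) *
    sp (Equiv.swap 0 2) (fun _ => 1) (fun _ => Or.inl rfl) *
    sp (Equiv.swap 3 4) (sA 3 4) (fun k => by by_cases h : k = 3 ∨ k = 4 <;> simp [sA, h]) *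
    sp (Equiv.swap 3 4) (fun _ => 1) (fun _ => Or.inl rfl) *
    sp (Equiv.swap 5 6) (sA 5 6) (fun k => by by_cases h : k = 5 ∨ k = 6 <;> simp [sA, h]) *
    sp (Equiv.swap 5 6) (fun _ => 1) (fun _ => Or.inl rfl) *
    sp (Equiv.swap 0 1) (fun _ => 1) (fun _ => Or.inl rfl) := by
  apply LinearIsometryEquiv.ext
  intro v
  ext k
  simp only [LinearIsometryEquiv.coe_mul, Function.comp_apply, sp_apply]
  fin_cases k <;> simp [wmap, sA, Equiv.swap_apply_def] <;> norm_num

lemma wmap_mem : wmap ∈ weylGroup rootsE7 := by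
  rw [wmap_eq]
  refine Subgroup.mul_mem _ (Subgroup.mul_mem _ (Subgroup.mul_mem _ (Subgroup.mul_mem _
    (Subgroup.mul_mem _ (Subgroup.mul_mem _ ?_ ?_) ?_) ?_) ?_) ?_) ?_
  · exact Subgroup.subset_closure (mem_add 0 2 (by decide))
  · exact Subgroup.subset_closure (mem_sub 0 2 (by decide))
  · exact Subgroup.subset_closure (mem_add 3 4 (by decide))
  · exact Subgroup.subset_closure (mem_sub 3 4 (by decide))
  · exact Subgroup.subset_closure (mem_add 5 6 (by decide))
  · exact Subgroup.subset_closure (mem_sub 5 6 (by decide))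
  · exact Subgroup.subset_closure (mem_sub 0 1 (by decide))


/-- For the root system of type `E₇` in `ℝ⁷`, the linear map
`ε₁ ↦ ε₂, ε₂ ↦ -ε₁, εᵢ ↦ -εᵢ (i ≥ 3)` is an element of the Weyl group, its eigenvalues
are among `{i, -i, -1}` (i.e. `(w + 1)(w² + 1) = 0`), and in particular `1` is not an
eigenvalue of `w`. -/
theorem typeE7_weyl_element :
    ∃ w : EuclideanSpace ℝ (Fin 7) ≃ₗᵢ[ℝ] EuclideanSpace ℝ (Fin 7),
      w ∈ weylGroup rootsE7 ∧
      (∀ (v : EuclideanSpace ℝ (Fin 7)) (i : Fin 7),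
        w v i = if i = 0 then -(v 1) else if i = 1 then v 0 else -(v i)) ∧
      (∀ v, w (w (w v)) + w (w v) + w v + v = 0) ∧
      (∀ v, w v = v → v = 0) := by
  refine ⟨wmap, wmap_mem, wmap_apply, ?_, ?_⟩
  · intro v
    ext k
    show wmap (wmap (wmap v)) k + (wmap (wmap v)) k + wmap v k + v k = 0
    simp only [wmap_apply]
    rcases eq_or_ne k 0 with rfl | hk0
    · norm_num
    rcases eq_or_ne k 1 with rfl | hk1
    · norm_num
    · simp only [if_neg hk0, if_neg hk1]; ring
  · intro v h
    ext k
    have e : ∀ i : Fin 7,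
        (if i = 0 then -(v 1) else if i = 1 then v 0 else -(v i)) = v i := by
      intro i; rw [← wmap_apply]; exact congrArg (fun x : EuclideanSpace ℝ (Fin 7) => x i) h
    have e0 := e 0; have e1 := e 1; have ek := e k
    norm_num at e0 e1
    rcases eq_or_ne k 0 with rfl | hk0
    · show v 0 = 0; linarith
    rcases eq_or_ne k 1 with rfl | hk1
    · show v 1 = 0; linarith
    · rw [if_neg hk0, if_neg hk1] at ek; show v k = 0; linarith
end
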